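/- Let x ∈ ℝ and z ∈ ℂ with Δ := x(1−x) − |z|² > 0, set C := 2√Δ and ρ := [[x, z],[conj z, 1−x]]. For k ∈ {1,2}, let (ẋ_k, ż_k) ∈ ℝ × ℂ be tangent data and let L_k be the closed-form SLD matrix built from (x, z, ẋ_k, ż_k): with α := |z|², β_k := 2·Re(ż_k·conj z), x_{L,k} := (β_k(x−1) − ẋ_k(2α + x − 1))/Δ, y_{L,k} := ((2α − x)ẋ_k − β_k x)/Δ, S_k := x_{L,k} + y_{L,k}, a_k := 2·Re(ż_k) − (Re z)·S_k, b_k := 2·Im(ż_k) − (Im z)·S_k, and L_k := [[x_{L,k}, a_k + i b_k],[a_k − i b_k, y_{L,k}]]. Define Ċ_k := ((1−2x)ẋ_k − 2·Re(conj(z)·ż_k))/√Δ. Then the SLD quantum Fisher pairing satisfies the three-channel identity (1/2)·Tr(ρ(L₁L₂ + L₂L₁)) = 4·ẋ₁ẋ₂ + 4·Re(ż₁·conj(ż₂)) + Ċ₁·Ċ₂. -/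

import Mathlib

/-!
Since `L₁` solves the SLD equation `ρ̇₁ = ½(ρL₁ + L₁ρ)`, cyclicity of the trace turns the pairing
into `Tr(ρ̇₁L₂)`, an explicit real bilinear expression in the entries. In it the trace of `L₂`
equals `Ċ₂/√Δ`, and the remaining `ẋ₁ẋ₂`-coefficient is `(1 - 4|z|² - (1 - 2x)²)/Δ = 4`.
-/

open Complex

/-- The closed-form SLD matrix associated with the reduced state data `(x, z)`
and tangent data `(xd, zd)`. -/
noncomputable def sldMat (x : ℝ) (z : ℂ) (xd : ℝ) (zd : ℂ) : Matrix (Fin 2) (Fin 2) ℂ :=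
  let Δ : ℝ := x * (1 - x) - ‖z‖ ^ 2
  let α : ℝ := ‖z‖ ^ 2
  let β : ℝ := 2 * (zd * (starRingEnd ℂ) z).re
  let xL : ℝ := (β * (x - 1) - xd * (2 * α + x - 1)) / Δ
  let yL : ℝ := ((2 * α - x) * xd - β * x) / Δ
  let S : ℝ := xL + yL
  let a : ℝ := 2 * zd.re - z.re * S
  let b : ℝ := 2 * zd.im - z.im * S
  !![(xL : ℂ), (a : ℂ) + (b : ℂ) * Complex.I;
     (a : ℂ) - (b : ℂ) * Complex.I, (yL : ℂ)]

/-- The induced derivative of the concurrence `C = 2√Δ` along tangent data `(xd, zd)`. -/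
noncomputable def concurDeriv (x : ℝ) (z : ℂ) (xd : ℝ) (zd : ℂ) : ℝ :=
  ((1 - 2 * x) * xd - 2 * ((starRingEnd ℂ) z * zd).re)
    / Real.sqrt (x * (1 - x) - ‖z‖ ^ 2)

open Matrix

/-- The SLD equation `D = ½(ρL + Lρ)`, with the `½` cleared so that it makes sense over any
commutative ring. -/
def IsSLD {n R : Type*} [Fintype n] [CommRing R] (ρ D L : Matrix n n R) : Prop :=
  ρ * L + L * ρ = 2 • D

theorem IsSLD.trace_mul_anticomm {n R : Type*} [Fintype n] [CommRing R]
    {ρ D L₁ : Matrix n n R} (h : IsSLD ρ D L₁) (L₂ : Matrix n n R) :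
    trace (ρ * (L₁ * L₂ + L₂ * L₁)) = 2 * trace (D * L₂) := by
  have hcycle : trace (ρ * (L₂ * L₁)) = trace (L₁ * ρ * L₂) := by
    rw [← Matrix.mul_assoc, trace_mul_cycle]
  rw [Matrix.mul_add, trace_add, hcycle, ← Matrix.mul_assoc, ← trace_add, ← Matrix.add_mul, h,
    smul_mul, trace_smul, nsmul_eq_mul, Nat.cast_ofNat]

noncomputable def hermMat (p q a b : ℝ) : Matrix (Fin 2) (Fin 2) ℂ :=
  !![(p : ℂ), (a : ℂ) + (b : ℂ) * I; (a : ℂ) - (b : ℂ) * I, (q : ℂ)]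

theorem hermMat_add (p q a b p' q' a' b' : ℝ) :
    hermMat p q a b + hermMat p' q' a' b' = hermMat (p + p') (q + q') (a + a') (b + b') := by
  ext i j
  fin_cases i <;> fin_cases j <;> simp [hermMat] <;> ring

theorem hermMat_mul_add_mul (p q a b p' q' a' b' : ℝ) :
    hermMat p q a b * hermMat p' q' a' b' + hermMat p' q' a' b' * hermMat p q a b
      = hermMat (2 * (p * p' + a * a' + b * b')) (2 * (q * q' + a * a' + b * b'))
          ((p + q) * a' + (p' + q') * a) ((p + q) * b' + (p' + q') * b) := by
  ext i j
  fin_cases i <;> fin_cases j <;>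
  · simp [hermMat, Complex.ext_iff]
    constructor <;> ring

theorem trace_hermMat_mul (p q a b p' q' a' b' : ℝ) :
    trace (hermMat p q a b * hermMat p' q' a' b')
      = ((p * p' + q * q' + 2 * (a * a' + b * b') : ℝ) : ℂ) := by
  simp [hermMat, trace_fin_two, Complex.ext_iff]
  constructor <;> ring

noncomputable def densityMat (x : ℝ) (z : ℂ) : Matrix (Fin 2) (Fin 2) ℂ :=
  !![(x : ℂ), z; (starRingEnd ℂ) z, 1 - (x : ℂ)]

noncomputable def tangentMat (xd : ℝ) (zd : ℂ) : Matrix (Fin 2) (Fin 2) ℂ :=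
  !![(xd : ℂ), zd; (starRingEnd ℂ) zd, -(xd : ℂ)]

theorem densityMat_eq_hermMat (x : ℝ) (z : ℂ) :
    densityMat x z = hermMat x (1 - x) z.re z.im := by
  ext i j
  fin_cases i <;> fin_cases j <;> simp [densityMat, hermMat, Complex.ext_iff]

theorem tangentMat_eq_hermMat (xd : ℝ) (zd : ℂ) :
    tangentMat xd zd = hermMat xd (-xd) zd.re zd.im := by
  ext i j
  fin_cases i <;> fin_cases j <;> simp [tangentMat, hermMat, Complex.ext_iff]

theorem sq_norm_eq_re_sq_add_im_sq (z : ℂ) : ‖z‖ ^ 2 = z.re ^ 2 + z.im ^ 2 := by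
  rw [Complex.sq_norm, Complex.normSq_apply]
  ring

noncomputable def sldDiagFst (x : ℝ) (z : ℂ) (xd : ℝ) (zd : ℂ) : ℝ :=
  (2 * (zd * (starRingEnd ℂ) z).re * (x - 1) - xd * (2 * ‖z‖ ^ 2 + x - 1))
    / (x * (1 - x) - ‖z‖ ^ 2)

noncomputable def sldDiagSnd (x : ℝ) (z : ℂ) (xd : ℝ) (zd : ℂ) : ℝ :=
  ((2 * ‖z‖ ^ 2 - x) * xd - 2 * (zd * (starRingEnd ℂ) z).re * x) / (x * (1 - x) - ‖z‖ ^ 2)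

theorem sldMat_eq_hermMat (x : ℝ) (z : ℂ) (xd : ℝ) (zd : ℂ) :
    sldMat x z xd zd =
      let S := sldDiagFst x z xd zd + sldDiagSnd x z xd zd
      hermMat (sldDiagFst x z xd zd) (sldDiagSnd x z xd zd)
        (2 * zd.re - z.re * S) (2 * zd.im - z.im * S) :=
  rfl

theorem isSLD_sldMat (x : ℝ) (z : ℂ) (xd : ℝ) (zd : ℂ) (hΔ : x * (1 - x) - ‖z‖ ^ 2 ≠ 0) :
    IsSLD (densityMat x z) (tangentMat xd zd) (sldMat x z xd zd) := by
  rw [IsSLD, densityMat_eq_hermMat, sldMat_eq_hermMat, hermMat_mul_add_mul,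
    tangentMat_eq_hermMat, two_nsmul, hermMat_add]
  rw [sq_norm_eq_re_sq_add_im_sq] at hΔ
  congr 1 <;>
  · simp only [sldDiagFst, sldDiagSnd, sq_norm_eq_re_sq_add_im_sq, Complex.mul_re,
      Complex.conj_re, Complex.conj_im]
    field_simp
    ring

theorem trace_tangentMat_mul_sldMat (x : ℝ) (z : ℂ) (xd₁ xd₂ : ℝ) (zd₁ zd₂ : ℂ)
    (hΔ : 0 < x * (1 - x) - ‖z‖ ^ 2) :
    trace (tangentMat xd₁ zd₁ * sldMat x z xd₂ zd₂)
      = ((4 * xd₁ * xd₂ + 4 * (zd₁ * (starRingEnd ℂ) zd₂).re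
          + concurDeriv x z xd₁ zd₁ * concurDeriv x z xd₂ zd₂ : ℝ) : ℂ) := by
  rw [tangentMat_eq_hermMat, sldMat_eq_hermMat, trace_hermMat_mul, concurDeriv, concurDeriv,
    div_mul_div_comm, Real.mul_self_sqrt hΔ.le]
  congr 1
  rw [sq_norm_eq_re_sq_add_im_sq] at hΔ
  simp only [sldDiagFst, sldDiagSnd, sq_norm_eq_re_sq_add_im_sq, Complex.mul_re,
    Complex.conj_re, Complex.conj_im]
  field_simp
  ring

/-- Three-channel identity for the SLD quantum Fisher pairing:
`(1/2) Tr(ρ(L₁L₂ + L₂L₁)) = 4 ẋ₁ẋ₂ + 4 Re(ż₁ conj ż₂) + Ċ₁ Ċ₂`. -/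
theorem sld_three_channel (x : ℝ) (z : ℂ) (xd₁ xd₂ : ℝ) (zd₁ zd₂ : ℂ)
    (hΔ : x * (1 - x) - ‖z‖ ^ 2 > 0) :
    let ρ : Matrix (Fin 2) (Fin 2) ℂ := !![(x : ℂ), z; (starRingEnd ℂ) z, 1 - (x : ℂ)]
    let L₁ := sldMat x z xd₁ zd₁
    let L₂ := sldMat x z xd₂ zd₂
    (1 / 2 : ℂ) * Matrix.trace (ρ * (L₁ * L₂ + L₂ * L₁))
      = ((4 * xd₁ * xd₂ + 4 * (zd₁ * (starRingEnd ℂ) zd₂).re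
          + concurDeriv x z xd₁ zd₁ * concurDeriv x z xd₂ zd₂ : ℝ) : ℂ) := by
  intro ρ L₁ L₂
  have hsld : IsSLD ρ (tangentMat xd₁ zd₁) L₁ := isSLD_sldMat x z xd₁ zd₁ hΔ.ne'
  rw [hsld.trace_mul_anticomm L₂, one_div, inv_mul_cancel_left₀ two_ne_zero]
  exact trace_tangentMat_mul_sldMat x z xd₁ xd₂ zd₁ zd₂ hΔ
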